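/- Let M be a countable non-standard model of KP^P. If for every a ∈ M there is a proper rank-initial self-embedding of M, bounded in M, fixing all ∈^M-members of a pointwise, then M satisfies Σ₁^P-Separation. -/

import Mathlib

namespace SetTh

/-- First-order formulas of the language of set theory, with `n` free variables
(de Bruijn indices). -/
inductive Fml : ℕ → Type where
  | mem {n : ℕ} (i j : Fin n) : Fml n
  | eq {n : ℕ} (i j : Fin n) : Fml n
  | not {n : ℕ} (φ : Fml n) : Fml n
  | and {n : ℕ} (φ ψ : Fml n) : Fml n
  | all {n : ℕ} (φ : Fml (n + 1)) : Fml n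

namespace Fml

def or {n : ℕ} (φ ψ : Fml n) : Fml n := Fml.not (Fml.and (Fml.not φ) (Fml.not ψ))

def imp {n : ℕ} (φ ψ : Fml n) : Fml n := Fml.or (Fml.not φ) ψ

def ex {n : ℕ} (φ : Fml (n + 1)) : Fml n := Fml.not (Fml.all (Fml.not φ))

/-- The formula `xᵢ ⊆ xⱼ`. -/
def subeq {n : ℕ} (i j : Fin n) : Fml n :=
  Fml.all (Fml.imp (Fml.mem (0 : Fin (n + 1)) i.succ) (Fml.mem (0 : Fin (n + 1)) j.succ))

end Fml

/-- Renaming of variables. -/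
def rename : (m n : ℕ) → (Fin m → Fin n) → Fml m → Fml n
  | _, _, f, Fml.mem i j => Fml.mem (f i) (f j)
  | _, _, f, Fml.eq i j => Fml.eq (f i) (f j)
  | m, n, f, Fml.not φ => Fml.not (rename m n f φ)
  | m, n, f, Fml.and φ ψ => Fml.and (rename m n f φ) (rename m n f ψ)
  | m, n, f, Fml.all φ =>
      Fml.all (rename (m + 1) (n + 1)
        (fun k => Fin.cases (0 : Fin (n + 1)) (fun i => (f i).succ) k) φ)

/-- Tarskian satisfaction for a structure `(M, E)`. -/
def Realize {M : Type*} (E : M → M → Prop) : (n : ℕ) → Fml n → (Fin n → M) → Prop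
  | _, Fml.mem i j, v => E (v i) (v j)
  | _, Fml.eq i j, v => v i = v j
  | n, Fml.not φ, v => ¬ Realize E n φ v
  | n, Fml.and φ ψ, v => Realize E n φ v ∧ Realize E n ψ v
  | n, Fml.all φ, v => ∀ x : M, Realize E (n + 1) φ (Fin.cons x v)

/-- Δ₀ formulas: all quantifiers are bounded by ∈. -/
inductive IsDelta0 : (n : ℕ) → Fml n → Prop where
  | mem {n : ℕ} (i j : Fin n) : IsDelta0 n (Fml.mem i j)
  | eq {n : ℕ} (i j : Fin n) : IsDelta0 n (Fml.eq i j)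
  | not {n : ℕ} {φ : Fml n} : IsDelta0 n φ → IsDelta0 n (Fml.not φ)
  | and {n : ℕ} {φ ψ : Fml n} : IsDelta0 n φ → IsDelta0 n ψ → IsDelta0 n (Fml.and φ ψ)
  | allMem {n : ℕ} (j : Fin n) {φ : Fml (n + 1)} :
      IsDelta0 (n + 1) φ →
      IsDelta0 n (Fml.all (Fml.imp (Fml.mem (0 : Fin (n + 1)) j.succ) φ))

/-- Δ₀^P formulas (Takahashi): quantifiers bounded by ∈ or by ⊆. -/
inductive IsDelta0P : (n : ℕ) → Fml n → Prop where
  | mem {n : ℕ} (i j : Fin n) : IsDelta0P n (Fml.mem i j)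
  | eq {n : ℕ} (i j : Fin n) : IsDelta0P n (Fml.eq i j)
  | not {n : ℕ} {φ : Fml n} : IsDelta0P n φ → IsDelta0P n (Fml.not φ)
  | and {n : ℕ} {φ ψ : Fml n} : IsDelta0P n φ → IsDelta0P n ψ → IsDelta0P n (Fml.and φ ψ)
  | allMem {n : ℕ} (j : Fin n) {φ : Fml (n + 1)} :
      IsDelta0P (n + 1) φ →
      IsDelta0P n (Fml.all (Fml.imp (Fml.mem (0 : Fin (n + 1)) j.succ) φ))
  | allSub {n : ℕ} (j : Fin n) {φ : Fml (n + 1)} :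
      IsDelta0P (n + 1) φ →
      IsDelta0P n (Fml.all (Fml.imp (Fml.subeq (0 : Fin (n + 1)) j.succ) φ))

/-- Levels of the Σ/Π hierarchy over a base class. `true` = Σ, `false` = Π. -/
def IsLvl (base : (n : ℕ) → Fml n → Prop) : Bool → ℕ → (n : ℕ) → Fml n → Prop
  | _, 0, n, φ => base n φ
  | true, k + 1, n, φ => ∃ ψ : Fml (n + 1), φ = Fml.ex ψ ∧ IsLvl base false k (n + 1) ψ
  | false, k + 1, n, φ => ∃ ψ : Fml (n + 1), φ = Fml.all ψ ∧ IsLvl base true k (n + 1) ψ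

def IsSigma (k n : ℕ) (φ : Fml n) : Prop := IsLvl IsDelta0 true k n φ
def IsPi (k n : ℕ) (φ : Fml n) : Prop := IsLvl IsDelta0 false k n φ
def IsSigmaP (k n : ℕ) (φ : Fml n) : Prop := IsLvl IsDelta0P true k n φ
def IsPiP (k n : ℕ) (φ : Fml n) : Prop := IsLvl IsDelta0P false k n φ

/-- B_k^P : closure of Σ_k^P (and Δ₀^P) under Boolean connectives and bounded quantifiers. -/
inductive IsBP (k : ℕ) : (n : ℕ) → Fml n → Prop where
  | ofSigma {n : ℕ} {φ : Fml n} : IsSigmaP k n φ → IsBP k n φ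
  | ofDelta0 {n : ℕ} {φ : Fml n} : IsDelta0P n φ → IsBP k n φ
  | not {n : ℕ} {φ : Fml n} : IsBP k n φ → IsBP k n (Fml.not φ)
  | and {n : ℕ} {φ ψ : Fml n} : IsBP k n φ → IsBP k n ψ → IsBP k n (Fml.and φ ψ)
  | allMem {n : ℕ} (j : Fin n) {φ : Fml (n + 1)} :
      IsBP k (n + 1) φ → IsBP k n (Fml.all (Fml.imp (Fml.mem (0 : Fin (n + 1)) j.succ) φ))
  | allSub {n : ℕ} (j : Fin n) {φ : Fml (n + 1)} :
      IsBP k (n + 1) φ → IsBP k n (Fml.all (Fml.imp (Fml.subeq (0 : Fin (n + 1)) j.succ) φ))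

section Axioms

variable {M : Type*}

def Extensionality (E : M → M → Prop) : Prop :=
  ∀ x y : M, (∀ u, E u x ↔ E u y) → x = y

def PairAx (E : M → M → Prop) : Prop :=
  ∀ u v : M, ∃ x, ∀ w, E w x ↔ (w = u ∨ w = v)

def UnionAx (E : M → M → Prop) : Prop :=
  ∀ x : M, ∃ u, ∀ r, E r u ↔ ∃ v, E v x ∧ E r v

def PowerAx (E : M → M → Prop) : Prop :=
  ∀ u : M, ∃ x, ∀ v, (E v x ↔ ∀ r, E r v → E r u)

def InfinityAx (E : M → M → Prop) : Prop :=
  ∃ x, (∃ e, E e x ∧ ∀ z, ¬ E z e) ∧ ∀ u, E u x → ∃ s, E s x ∧ ∀ w, (E w s ↔ w = u)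

/-- Separation schema for a class `Γ` of formulas. -/
def SepScheme (E : M → M → Prop) (Γ : (n : ℕ) → Fml n → Prop) : Prop :=
  ∀ (n : ℕ) (φ : Fml (n + 1)), Γ (n + 1) φ → ∀ (v : Fin n → M) (a : M),
    ∃ b, ∀ u, E u b ↔ (E u a ∧ Realize E (n + 1) φ (Fin.cons u v))

/-- Collection schema for a class `Γ` of formulas (variable 0 = u, variable 1 = w). -/
def CollScheme (E : M → M → Prop) (Γ : (n : ℕ) → Fml n → Prop) : Prop :=
  ∀ (n : ℕ) (φ : Fml (n + 2)), Γ (n + 2) φ → ∀ (v : Fin n → M) (x : M),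
    (∀ u, E u x → ∃ w, Realize E (n + 2) φ (Fin.cons u (Fin.cons w v))) →
    ∃ y, ∀ u, E u x → ∃ w, E w y ∧ Realize E (n + 2) φ (Fin.cons u (Fin.cons w v))

/-- Foundation schema for a class `Γ` of formulas. -/
def FndScheme (E : M → M → Prop) (Γ : (n : ℕ) → Fml n → Prop) : Prop :=
  ∀ (n : ℕ) (φ : Fml (n + 1)), Γ (n + 1) φ → ∀ (v : Fin n → M),
    (∃ a, Realize E (n + 1) φ (Fin.cons a v)) →
    ∃ a, Realize E (n + 1) φ (Fin.cons a v) ∧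
      ∀ u, E u a → ¬ Realize E (n + 1) φ (Fin.cons u v)

/-- Kripke–Platek set theory. -/
def KP (E : M → M → Prop) : Prop :=
  Extensionality E ∧ PairAx E ∧ UnionAx E ∧ InfinityAx E ∧
  SepScheme E IsDelta0 ∧ CollScheme E IsDelta0 ∧ FndScheme E (IsPi 1)

/-- Power Kripke–Platek set theory KP^P. -/
def KPP (E : M → M → Prop) : Prop :=
  Extensionality E ∧ PairAx E ∧ UnionAx E ∧ PowerAx E ∧ InfinityAx E ∧
  SepScheme E IsDelta0P ∧ CollScheme E IsDelta0P ∧ FndScheme E (IsPiP 1)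

def IsTrans (E : M → M → Prop) (a : M) : Prop := ∀ x, E x a → ∀ y, E y x → E y a

/-- `a` is an ordinal of `(M, E)`: transitive, with transitive members,
linearly ordered by `E`. -/
def IsOrd (E : M → M → Prop) (a : M) : Prop :=
  IsTrans E a ∧ (∀ x, E x a → IsTrans E x) ∧
  (∀ x, E x a → ∀ y, E y a → x = y ∨ E x y ∨ E y x)

def OrdLE (E : M → M → Prop) (a b : M) : Prop := a = b ∨ E a b

/-- `rk` is the (unique, definable) rank function of `(M, E)`:
`rk x` is the least ordinal containing `rk y` for every `y ∈ x`. -/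
def IsRankFn (E : M → M → Prop) (rk : M → M) : Prop :=
  (∀ x, IsOrd E (rk x)) ∧
  (∀ x y, E y x → E (rk y) (rk x)) ∧
  (∀ x α, IsOrd E α → (∀ y, E y x → E (rk y) α) → OrdLE E (rk x) α)

/-- `V` is the cumulative hierarchy function of `(M, E)` relative to the rank
function `rk`: for an ordinal `α`, `V α` consists of the sets of rank `< α`. -/
def IsVFn (E : M → M → Prop) (rk V : M → M) : Prop :=
  ∀ α, IsOrd E α → ∀ x, (E x (V α) ↔ E (rk x) α)

/-- `p` is the internal Kuratowski ordered pair `⟨a, b⟩`. -/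
def IsOPair (E : M → M → Prop) (p a b : M) : Prop :=
  ∀ z, E z p ↔ ((∀ w, E w z ↔ w = a) ∨ (∀ w, E w z ↔ (w = a ∨ w = b)))

/-- `y` is a value of the internal function `f` at `x`. -/
def AppR (E : M → M → Prop) (f x y : M) : Prop := ∃ p, E p f ∧ IsOPair E p x y

/-- `f` is an internal function from `a` to `b`. -/
def IsIntFunc (E : M → M → Prop) (f a b : M) : Prop :=
  (∀ p, E p f → ∃ x y, E x a ∧ E y b ∧ IsOPair E p x y) ∧
  (∀ x, E x a → ∃! y, AppR E f x y)

def IsLimitOrd (E : M → M → Prop) (a : M) : Prop :=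
  IsOrd E a ∧ (∃ z, E z a) ∧ ∀ z, E z a → ∃ z', E z z' ∧ E z' a

/-- `w` is the internal ω of `(M, E)`: the least limit ordinal. -/
def IsOmega (E : M → M → Prop) (w : M) : Prop :=
  IsLimitOrd E w ∧ ∀ z, E z w → ¬ IsLimitOrd E z

end Axioms

section Embeddings

variable {M N : Type*}

def IsEmbedding (E : M → M → Prop) (E' : N → N → Prop) (i : M → N) : Prop :=
  Function.Injective i ∧ ∀ a b : M, E a b ↔ E' (i a) (i b)

def IsInitialEmb (E' : N → N → Prop) (i : M → N) : Prop :=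
  ∀ (m : M) (x : N), E' x (i m) → x ∈ Set.range i

def IsPInitialEmb (E' : N → N → Prop) (i : M → N) : Prop :=
  IsInitialEmb E' i ∧ ∀ (m : M) (x : N), (∀ z, E' z x → E' z (i m)) → x ∈ Set.range i

def IsRankInitialEmb (E' : N → N → Prop) (rk' : N → N) (i : M → N) : Prop :=
  ∀ (m : M) (x : N), OrdLE E' (rk' x) (rk' (i m)) → x ∈ Set.range i

def IsBoundedEmb (E : M → M → Prop) (E' : N → N → Prop) (i : M → N) : Prop :=
  ∃ β, IsOrd E' β ∧ ∀ a : M, IsOrd E a → E' (i a) β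

def IsToplessEmb (E : M → M → Prop) (E' : N → N → Prop) (i : M → N) : Prop :=
  IsBoundedEmb E E' i ∧
  ∀ β, IsOrd E' β → β ∉ Set.range i → ∃ β', IsOrd E' β' ∧ β' ∉ Set.range i ∧ E' β' β

end Embeddings

/-- Semantic equivalence over all models of KP^P (= provable equivalence, by
completeness). -/
def EquivOverKPP (n : ℕ) (φ ψ : Fml n) : Prop :=
  ∀ (M : Type) (E : M → M → Prop), KPP E → ∀ v : Fin n → M,
    (Realize E n φ v ↔ Realize E n ψ v)

/-- `φ` is Σ₁^P up to provable equivalence over KP^P. -/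
def Sigma1PUpto (n : ℕ) (φ : Fml n) : Prop :=
  ∃ ψ : Fml n, IsSigmaP 1 n ψ ∧ EquivOverKPP n φ ψ

/-! ### Auxiliary development for the main theorem -/

section Aux

open Classical

/-- Bounded universal quantifier `∀ x ∈ v j, φ`. -/
def allIn {n : ℕ} (j : Fin n) (φ : Fml (n + 1)) : Fml n :=
  Fml.all (Fml.imp (Fml.mem (0 : Fin (n + 1)) j.succ) φ)

/-- Bounded existential quantifier `∃ x ∈ v j, φ`. -/
def exIn {n : ℕ} (j : Fin n) (φ : Fml (n + 1)) : Fml n :=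
  Fml.not (allIn j (Fml.not φ))

/-- Bounded universal quantifier `∀ x ⊆ v j, φ`. -/
def allSubF {n : ℕ} (j : Fin n) (φ : Fml (n + 1)) : Fml n :=
  Fml.all (Fml.imp (Fml.subeq (0 : Fin (n + 1)) j.succ) φ)

section RealizeLemmas

variable {M : Type*} (E : M → M → Prop)

@[simp] lemma realize_mem {n : ℕ} (i j : Fin n) (v : Fin n → M) :
    Realize E n (Fml.mem i j) v ↔ E (v i) (v j) := Iff.rfl

@[simp] lemma realize_eq {n : ℕ} (i j : Fin n) (v : Fin n → M) :
    Realize E n (Fml.eq i j) v ↔ v i = v j := Iff.rfl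

@[simp] lemma realize_not {n : ℕ} (φ : Fml n) (v : Fin n → M) :
    Realize E n (Fml.not φ) v ↔ ¬ Realize E n φ v := Iff.rfl

@[simp] lemma realize_and {n : ℕ} (φ ψ : Fml n) (v : Fin n → M) :
    Realize E n (Fml.and φ ψ) v ↔ Realize E n φ v ∧ Realize E n ψ v := Iff.rfl

@[simp] lemma realize_all {n : ℕ} (φ : Fml (n + 1)) (v : Fin n → M) :
    Realize E n (Fml.all φ) v ↔ ∀ x : M, Realize E (n + 1) φ (Fin.cons x v) := Iff.rfl

@[simp] lemma realize_or {n : ℕ} (φ ψ : Fml n) (v : Fin n → M) :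
    Realize E n (Fml.or φ ψ) v ↔ Realize E n φ v ∨ Realize E n ψ v := by
  simp only [Fml.or, realize_not, realize_and]; tauto

@[simp] lemma realize_imp {n : ℕ} (φ ψ : Fml n) (v : Fin n → M) :
    Realize E n (Fml.imp φ ψ) v ↔ (Realize E n φ v → Realize E n ψ v) := by
  simp only [Fml.imp, realize_or, realize_not]; tauto

@[simp] lemma realize_ex {n : ℕ} (φ : Fml (n + 1)) (v : Fin n → M) :
    Realize E n (Fml.ex φ) v ↔ ∃ x : M, Realize E (n + 1) φ (Fin.cons x v) := by
  simp only [Fml.ex, realize_not, realize_all]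
  push_neg
  simp

@[simp] lemma realize_subeq {n : ℕ} (i j : Fin n) (v : Fin n → M) :
    Realize E n (Fml.subeq i j) v ↔ ∀ z, E z (v i) → E z (v j) := by
  simp [Fml.subeq]

@[simp] lemma realize_allIn {n : ℕ} (j : Fin n) (φ : Fml (n + 1)) (v : Fin n → M) :
    Realize E n (allIn j φ) v ↔ ∀ x, E x (v j) → Realize E (n + 1) φ (Fin.cons x v) := by
  simp [allIn]

@[simp] lemma realize_exIn {n : ℕ} (j : Fin n) (φ : Fml (n + 1)) (v : Fin n → M) :
    Realize E n (exIn j φ) v ↔ ∃ x, E x (v j) ∧ Realize E (n + 1) φ (Fin.cons x v) := by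
  simp only [exIn, realize_not, realize_allIn]
  push_neg
  simp

@[simp] lemma realize_allSub {n : ℕ} (j : Fin n) (φ : Fml (n + 1)) (v : Fin n → M) :
    Realize E n (allSubF j φ) v ↔
      ∀ x, (∀ z, E z x → E z (v j)) → Realize E (n + 1) φ (Fin.cons x v) := by
  simp [allSubF]

end RealizeLemmas

section Delta0Lemmas

lemma IsDelta0P.or' {n : ℕ} {φ ψ : Fml n} (h1 : IsDelta0P n φ) (h2 : IsDelta0P n ψ) :
    IsDelta0P n (Fml.or φ ψ) := .not (.and (.not h1) (.not h2))

lemma IsDelta0P.imp' {n : ℕ} {φ ψ : Fml n} (h1 : IsDelta0P n φ) (h2 : IsDelta0P n ψ) :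
    IsDelta0P n (Fml.imp φ ψ) := IsDelta0P.or' (.not h1) h2

lemma IsDelta0P.subeq' {n : ℕ} (i j : Fin n) : IsDelta0P n (Fml.subeq i j) :=
  IsDelta0P.allMem i (.mem _ _)

lemma IsDelta0P.allIn' {n : ℕ} (j : Fin n) {φ : Fml (n + 1)} (h : IsDelta0P (n + 1) φ) :
    IsDelta0P n (allIn j φ) := .allMem j h

lemma IsDelta0P.exIn' {n : ℕ} (j : Fin n) {φ : Fml (n + 1)} (h : IsDelta0P (n + 1) φ) :
    IsDelta0P n (exIn j φ) := .not (.allMem j (.not h))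

lemma IsDelta0P.allSubF' {n : ℕ} (j : Fin n) {φ : Fml (n + 1)} (h : IsDelta0P (n + 1) φ) :
    IsDelta0P n (allSubF j φ) := .allSub j h

end Delta0Lemmas

section RenameLemmas

lemma rename_not {m n : ℕ} (f : Fin m → Fin n) (φ : Fml m) :
    rename m n f (Fml.not φ) = Fml.not (rename m n f φ) := rfl

lemma rename_and {m n : ℕ} (f : Fin m → Fin n) (φ ψ : Fml m) :
    rename m n f (Fml.and φ ψ) = Fml.and (rename m n f φ) (rename m n f ψ) := rfl

lemma rename_imp {m n : ℕ} (f : Fin m → Fin n) (φ ψ : Fml m) :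
    rename m n f (Fml.imp φ ψ) = Fml.imp (rename m n f φ) (rename m n f ψ) := rfl

lemma rename_subeq {m n : ℕ} (f : Fin m → Fin n) (i j : Fin m) :
    rename m n f (Fml.subeq i j) = Fml.subeq (f i) (f j) := by
  simp only [Fml.subeq, Fml.imp, Fml.or, rename]
  simp

lemma realize_rename {M : Type*} (E : M → M → Prop) :
    ∀ {m : ℕ} (φ : Fml m) {n : ℕ} (f : Fin m → Fin n) (v : Fin n → M),
      Realize E n (rename m n f φ) v ↔ Realize E m φ (fun k => v (f k)) := by
  intro m φ
  induction φ with
  | mem i j => intro n f v; simp [rename]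
  | eq i j => intro n f v; simp [rename]
  | not φ ih => intro n f v; simp only [rename, realize_not, ih]
  | and φ ψ ih1 ih2 => intro n f v; simp only [rename, realize_and, ih1, ih2]
  | @all m1 φ ih =>
    intro n f v
    simp only [rename, realize_all]
    refine forall_congr' fun x => ?_
    rw [ih]
    have hv : (fun k => (Fin.cons x v : Fin (n + 1) → M)
          (Fin.cases (0 : Fin (n + 1)) (fun i => (f i).succ) k))
        = (Fin.cons x (fun k => v (f k)) : Fin (m1 + 1) → M) := by
      funext k
      refine Fin.cases ?_ (fun j => ?_) k <;> simp
    rw [hv]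

lemma IsDelta0P.rename_pres :
    ∀ {m : ℕ} {φ : Fml m}, IsDelta0P m φ → ∀ {n : ℕ} (f : Fin m → Fin n),
      IsDelta0P n (rename m n f φ) := by
  intro m φ h
  induction h with
  | mem i j => intro n f; exact .mem _ _
  | eq i j => intro n f; exact .eq _ _
  | not _ ih => intro n f; exact .not (ih f)
  | and _ _ ih1 ih2 => intro n f; exact .and (ih1 f) (ih2 f)
  | @allMem m' j φ' _ ih =>
    intro n f
    have heq : rename m' n f (Fml.all (Fml.imp (Fml.mem (0 : Fin (m' + 1)) j.succ) φ')) =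
        Fml.all (Fml.imp (Fml.mem (0 : Fin (n + 1)) (f j).succ)
          (rename (m' + 1) (n + 1)
            (fun k => Fin.cases (0 : Fin (n + 1)) (fun i => (f i).succ) k) φ')) := rfl
    rw [heq]
    exact .allMem (f j) (ih _)
  | @allSub m' j φ' _ ih =>
    intro n f
    have heq : rename m' n f (Fml.all (Fml.imp (Fml.subeq (0 : Fin (m' + 1)) j.succ) φ')) =
        Fml.all (Fml.imp (Fml.subeq (0 : Fin (n + 1)) (f j).succ)
          (rename (m' + 1) (n + 1)
            (fun k => Fin.cases (0 : Fin (n + 1)) (fun i => (f i).succ) k) φ')) := rfl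
    rw [heq]
    exact .allSub (f j) (ih _)

end RenameLemmas

end Aux
section Towers

variable {M : Type*} (E : M → M → Prop)

/-- `c` is transitive and supertransitive. -/
def TSet (c : M) : Prop :=
  (∀ y, E y c → ∀ z, E z y → E z c) ∧
  (∀ y, E y c → ∀ x, (∀ z, E z x → E z y) → E x c)

/-- `T` is a tower of stages. -/
def TowerP (T : M) : Prop :=
  (∀ c, E c T → TSet E c) ∧
  ((∀ c, E c T → ∀ c', E c' T → (E c c' ∨ (c = c' ∨ E c' c))) ∧
  ((∀ c, E c T → ∀ x, E x c → ∃ d, E d T ∧ (E d c ∧ ∀ z, E z x → E z d)) ∧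
  (∀ c, E c T → ∀ d, E d c → TSet E d → ∀ x, (∀ z, E z x → E z d) → E x c)))

/-- Internal formula for transitivity of `v i`. -/
def TransF {n : ℕ} (i : Fin n) : Fml n :=
  allIn i (allIn (0 : Fin (n + 1)) (Fml.mem (0 : Fin (n + 2)) i.succ.succ))

/-- Internal formula for supertransitivity of `v i`. -/
def SuperF {n : ℕ} (i : Fin n) : Fml n :=
  allIn i (allSubF (0 : Fin (n + 1)) (Fml.mem (0 : Fin (n + 2)) i.succ.succ))

def TSF {n : ℕ} (i : Fin n) : Fml n := Fml.and (TransF i) (SuperF i)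

@[simp] lemma realize_TransF {n : ℕ} (i : Fin n) (v : Fin n → M) :
    Realize E n (TransF i) v ↔ ∀ y, E y (v i) → ∀ z, E z y → E z (v i) := by
  simp [TransF]

@[simp] lemma realize_SuperF {n : ℕ} (i : Fin n) (v : Fin n → M) :
    Realize E n (SuperF i) v ↔
      ∀ y, E y (v i) → ∀ x, (∀ z, E z x → E z y) → E x (v i) := by
  simp [SuperF]

@[simp] lemma realize_TSF {n : ℕ} (i : Fin n) (v : Fin n → M) :
    Realize E n (TSF i) v ↔ TSet E (v i) := by
  simp [TSF, TSet]

lemma IsDelta0P_TransF {n : ℕ} (i : Fin n) : IsDelta0P n (TransF i) :=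
  .allIn' _ (.allIn' _ (.mem _ _))

lemma IsDelta0P_SuperF {n : ℕ} (i : Fin n) : IsDelta0P n (SuperF i) :=
  .allIn' _ (.allSubF' _ (.mem _ _))

lemma IsDelta0P_TSF {n : ℕ} (i : Fin n) : IsDelta0P n (TSF i) :=
  .and (IsDelta0P_TransF i) (IsDelta0P_SuperF i)

/-- Internal formula: `v 0` is a tower. -/
def TowerFml : Fml 1 :=
  Fml.and (allIn (0 : Fin 1) (TSF (0 : Fin 2)))
  (Fml.and
    (allIn (0 : Fin 1) (allIn ((0 : Fin 1).succ : Fin 2)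
      (Fml.or (Fml.mem ((0 : Fin 2).succ) (0 : Fin 3))
        (Fml.or (Fml.eq ((0 : Fin 2).succ) (0 : Fin 3))
          (Fml.mem (0 : Fin 3) ((0 : Fin 2).succ))))))
  (Fml.and
    (allIn (0 : Fin 1) (allIn (0 : Fin 2)
      (exIn ((0 : Fin 1).succ.succ : Fin 3)
        (Fml.and (Fml.mem (0 : Fin 4) ((0 : Fin 2).succ.succ))
          (Fml.subeq ((0 : Fin 3).succ) (0 : Fin 4))))))
    (allIn (0 : Fin 1) (allIn (0 : Fin 2)
      (Fml.imp (TSF (0 : Fin 3))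
        (allSubF (0 : Fin 3) (Fml.mem (0 : Fin 4) ((0 : Fin 2).succ.succ))))))))

lemma realize_TowerFml (v : Fin 1 → M) :
    Realize E 1 TowerFml v ↔ TowerP E (v 0) := by
  simp only [TowerFml, TowerP, TSet, realize_and, realize_allIn, realize_exIn, realize_allSub, realize_subeq,
    realize_or, realize_eq, realize_mem, realize_imp, realize_TSF, Fin.cons_succ, Fin.cons_zero]

lemma IsDelta0P_TowerFml : IsDelta0P 1 TowerFml :=
  .and (.allIn' _ (IsDelta0P_TSF _))
  (.and (.allIn' _ (.allIn' _ (.or' (.mem _ _) (.or' (.eq _ _) (.mem _ _)))))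
  (.and (.allIn' _ (.allIn' _ (.exIn' _ (.and (.mem _ _) (.subeq' _ _)))))
    (.allIn' _ (.allIn' _ (.imp' (IsDelta0P_TSF _)
      (.allSubF' _ (.mem _ _)))))))

end Towers
section SetLemmas

variable {M : Type*} (E : M → M → Prop)

/-- Every nonempty set has an `E`-minimal element (from Π₁^P-Foundation). -/
lemma set_min [Nonempty M] (fndA : FndScheme E (IsPiP 1)) {s : M} (hne : ∃ x, E x s) :
    ∃ x, E x s ∧ ∀ u, E u x → ¬ E u s := by
  have hpi : IsPiP 1 2 (Fml.all (Fml.mem ((0 : Fin 2).succ) ((0 : Fin 1).succ.succ))) :=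
    ⟨_, rfl, .mem _ _⟩
  have h := fndA 1 (Fml.all (Fml.mem ((0 : Fin 2).succ) ((0 : Fin 1).succ.succ))) hpi
    (fun _ => s) ?_
  · obtain ⟨a, ha1, ha2⟩ := h
    refine ⟨a, ?_, fun u hu => ?_⟩
    · exact ha1 (Classical.arbitrary M)
    · intro hus
      exact ha2 u hu (fun z => hus)
  · obtain ⟨x, hx⟩ := hne
    exact ⟨x, fun z => hx⟩

/-- Binary union. -/
lemma bin_union (pairA : PairAx E) (unionA : UnionAx E) (x y : M) :
    ∃ z, ∀ r, E r z ↔ (E r x ∨ E r y) := by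
  obtain ⟨p, hp⟩ := pairA x y
  obtain ⟨u, hu⟩ := unionA p
  refine ⟨u, fun r => ?_⟩
  rw [hu]
  constructor
  · rintro ⟨w, hwp, hrw⟩
    rcases (hp w).1 hwp with rfl | rfl
    · exact Or.inl hrw
    · exact Or.inr hrw
  · rintro (h | h)
    · exact ⟨x, (hp x).2 (Or.inl rfl), h⟩
    · exact ⟨y, (hp y).2 (Or.inr rfl), h⟩

/-- A set whose members are those of `a` together with the values of `v`. -/
lemma params_set (pairA : PairAx E) (unionA : UnionAx E) :
    ∀ (n : ℕ) (v : Fin n → M) (a : M), ∃ a₀, ∀ z, E z a₀ ↔ (E z a ∨ ∃ k, z = v k) := by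
  intro n
  induction n with
  | zero =>
    intro v a
    exact ⟨a, fun z => by simp⟩
  | succ n ih =>
    intro v a
    obtain ⟨a₀', h'⟩ := ih (fun k => v k.succ) a
    obtain ⟨s, hs⟩ := pairA (v 0) (v 0)
    obtain ⟨a₀, h⟩ := bin_union E pairA unionA a₀' s
    refine ⟨a₀, fun z => ?_⟩
    rw [h, h', hs]
    rw [Fin.exists_fin_succ]
    tauto

end SetLemmas
section TowerComp

variable {M : Type*} (E : M → M → Prop)

/-- Any two stages (members of towers) are comparable. -/
lemma tower_comp [Nonempty M] (ext : Extensionality E) (sepA : SepScheme E IsDelta0P)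
    (fndA : FndScheme E (IsPiP 1)) {T T' c c' : M}
    (hT : TowerP E T) (hT' : TowerP E T') (hc : E c T) (hc' : E c' T') :
    E c c' ∨ c = c' ∨ E c' c := by
  classical
  by_contra hbad0
  -- D := { d ∈ T | ∃ e ∈ T', bad d e }
  have hd3 : IsDelta0P 3 (Fml.not (Fml.or (Fml.mem ((0 : Fin 2).succ) (0 : Fin 3))
      (Fml.or (Fml.eq ((0 : Fin 2).succ) (0 : Fin 3))
        (Fml.mem (0 : Fin 3) ((0 : Fin 2).succ))))) :=
    .not (.or' (.mem _ _) (.or' (.eq _ _) (.mem _ _)))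
  obtain ⟨D, hD⟩ := sepA 1 (exIn ((0 : Fin 1).succ) (Fml.not
      (Fml.or (Fml.mem ((0 : Fin 2).succ) (0 : Fin 3))
        (Fml.or (Fml.eq ((0 : Fin 2).succ) (0 : Fin 3))
          (Fml.mem (0 : Fin 3) ((0 : Fin 2).succ))))))
    (.exIn' _ hd3) (fun _ => T') T
  have hD' : ∀ u, E u D ↔ E u T ∧ ∃ e, E e T' ∧ ¬(E u e ∨ u = e ∨ E e u) := by
    intro u
    rw [hD u]
    simp
  -- minimal element d₀ of D
  obtain ⟨d₀, hd₀D, hd₀min⟩ := set_min E fndA (s := D)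
    ⟨c, (hD' c).2 ⟨hc, c', hc', hbad0⟩⟩
  obtain ⟨hd₀T, e1, he1T', hbad1⟩ := (hD' d₀).1 hd₀D
  -- D' := { e ∈ T' | bad d₀ e }
  have hd2 : IsDelta0P 2 (Fml.not (Fml.or (Fml.mem ((0 : Fin 1).succ) (0 : Fin 2))
      (Fml.or (Fml.eq ((0 : Fin 1).succ) (0 : Fin 2))
        (Fml.mem (0 : Fin 2) ((0 : Fin 1).succ))))) :=
    .not (.or' (.mem _ _) (.or' (.eq _ _) (.mem _ _)))
  obtain ⟨D2, hD2⟩ := sepA 1 (Fml.not (Fml.or (Fml.mem ((0 : Fin 1).succ) (0 : Fin 2))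
      (Fml.or (Fml.eq ((0 : Fin 1).succ) (0 : Fin 2))
        (Fml.mem (0 : Fin 2) ((0 : Fin 1).succ)))))
    hd2 (fun _ => d₀) T'
  have hD2' : ∀ u, E u D2 ↔ E u T' ∧ ¬(E d₀ u ∨ d₀ = u ∨ E u d₀) := by
    intro u
    rw [hD2 u]
    simp
  obtain ⟨e₀, he₀D, he₀min⟩ := set_min E fndA (s := D2)
    ⟨e1, (hD2' e1).2 ⟨he1T', hbad1⟩⟩
  obtain ⟨he₀T', hbad⟩ := (hD2' e₀).1 he₀D
  -- Claim 1 : d₀ ⊆ e₀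
  have hsub1 : ∀ x, E x d₀ → E x e₀ := by
    intro x hx
    obtain ⟨d, hdT, hdd₀, hxd⟩ := hT.2.2.1 d₀ hd₀T x hx
    have hdgood : ¬ (E d T ∧ ∃ e, E e T' ∧ ¬(E d e ∨ d = e ∨ E e d)) := by
      intro h
      exact hd₀min d hdd₀ ((hD' d).2 h)
    have htri : E d e₀ ∨ d = e₀ ∨ E e₀ d := by
      by_contra h
      exact hdgood ⟨hdT, e₀, he₀T', h⟩
    rcases htri with h | h | h
    · -- x ⊆ d ∈ e₀, d transitive-supertransitive, so x ∈ e₀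
      exact hT'.2.2.2 e₀ he₀T' d h (hT.1 d hdT) x hxd
    · exact absurd (Or.inr (Or.inr (h ▸ hdd₀))) hbad
    · exact absurd (Or.inr (Or.inr ((hT.1 d₀ hd₀T).1 d hdd₀ e₀ h))) hbad
  -- Claim 2 : e₀ ⊆ d₀
  have hsub2 : ∀ x, E x e₀ → E x d₀ := by
    intro x hx
    obtain ⟨e, heT', hee₀, hxe⟩ := hT'.2.2.1 e₀ he₀T' x hx
    have htri : E d₀ e ∨ d₀ = e ∨ E e d₀ := by
      by_contra h
      exact he₀min e hee₀ ((hD2' e).2 ⟨heT', h⟩)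
    rcases htri with h | h | h
    · exact absurd (Or.inl ((hT'.1 e₀ he₀T').1 e hee₀ d₀ h)) hbad
    · exact absurd (Or.inl (h ▸ hee₀)) hbad
    · exact hT.2.2.2 d₀ hd₀T e h (hT'.1 e heT') x hxe
  exact absurd (Or.inr (Or.inl (ext d₀ e₀ fun u => ⟨hsub1 u, hsub2 u⟩))) hbad

end TowerComp
section TowerTotal

variable {M : Type*} (E : M → M → Prop)

/-- Every set belongs to some stage of some tower. -/
lemma tower_total [Nonempty M] (ext : Extensionality E) (pairA : PairAx E)
    (unionA : UnionAx E) (powA : PowerAx E) (sepA : SepScheme E IsDelta0P)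
    (collA : CollScheme E IsDelta0P) (fndA : FndScheme E (IsPiP 1)) :
    ∀ x : M, ∃ T c, TowerP E T ∧ E c T ∧ E x c := by
  classical
  by_contra h
  push_neg at h
  obtain ⟨x₀, hx₀⟩ := h
  -- the foundation formula  ∀ T, ¬(Tower T ∧ ∃ c ∈ T, x ∈ c)
  set InT2 : Fml 2 := Fml.and (rename 1 2 (fun _ => (0 : Fin 2)) TowerFml)
      (exIn (0 : Fin 2) (Fml.mem ((0 : Fin 1).succ.succ) (0 : Fin 3))) with hInT2
  have hrInT2 : ∀ (T x : M) (v : Fin 0 → M),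
      Realize E 2 InT2 (Fin.cons T (Fin.cons x v)) ↔
        (TowerP E T ∧ ∃ c, E c T ∧ E x c) := by
    intro T x v
    rw [hInT2]
    simp only [realize_and, realize_rename, realize_exIn, realize_mem,
      Fin.cons_succ, Fin.cons_zero]
    rw [realize_TowerFml]
  have hpi : IsPiP 1 1 (Fml.all (Fml.not InT2)) :=
    ⟨_, rfl, .not (.and (IsDelta0P_TowerFml.rename_pres _) (.exIn' _ (.mem _ _)))⟩
  have hpre : ∃ aa : M, Realize E 1 (Fml.all (Fml.not InT2)) (Fin.cons aa Fin.elim0) := by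
    refine ⟨x₀, ?_⟩
    intro T
    rw [realize_not, hrInT2]
    rintro ⟨h1, c, h2, h3⟩
    exact hx₀ T c h1 h2 h3
  obtain ⟨a, ha1, ha2⟩ := fndA 0 (Fml.all (Fml.not InT2)) hpi Fin.elim0 hpre
  -- a is a minimal set belonging to no stage; its members all belong to stages
  have ha1' : ∀ T c, TowerP E T → E c T → ¬ E a c := by
    intro T c h1 h2 h3
    have := ha1 T
    rw [realize_not, hrInT2] at this
    exact this ⟨h1, c, h2, h3⟩
  have ha2' : ∀ u, E u a → ∃ T, TowerP E T ∧ ∃ c, E c T ∧ E u c := by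
    intro u hu
    have := ha2 u hu
    simp only [realize_all, realize_not] at this
    push_neg at this
    obtain ⟨T, hT⟩ := this
    rw [hrInT2] at hT
    exact ⟨T, hT⟩
  -- collect towers for the members of a
  set φcoll : Fml 2 := Fml.and (rename 1 2 (fun _ => ((0 : Fin 1).succ)) TowerFml)
      (exIn ((0 : Fin 1).succ) (Fml.mem ((0 : Fin 2).succ) (0 : Fin 3))) with hφcoll
  have hrcoll : ∀ (u w : M) (v : Fin 0 → M),
      Realize E 2 φcoll (Fin.cons u (Fin.cons w v)) ↔
        (TowerP E w ∧ ∃ c, E c w ∧ E u c) := by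
    intro u w v
    rw [hφcoll]
    simp only [realize_and, realize_rename, realize_exIn, realize_mem,
      Fin.cons_succ, Fin.cons_zero]
    rw [realize_TowerFml]
  have hcollD : IsDelta0P 2 φcoll :=
    .and (IsDelta0P_TowerFml.rename_pres _) (.exIn' _ (.mem _ _))
  have hpre2 : ∀ u, E u a → ∃ w, Realize E 2 φcoll (Fin.cons u (Fin.cons w Fin.elim0)) := by
    intro u hu
    obtain ⟨T, h1, c, h2, h3⟩ := ha2' u hu
    exact ⟨T, (hrcoll u T _).2 ⟨h1, c, h2, h3⟩⟩
  obtain ⟨Y, hY⟩ := collA 0 φcoll hcollD Fin.elim0 a hpre2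
  -- U := the towers in Y ; W := union of U ; C := union of W ; cP := power of C
  obtain ⟨U, hU⟩ := sepA 0 TowerFml IsDelta0P_TowerFml Fin.elim0 Y
  have hU' : ∀ T, E T U ↔ (E T Y ∧ TowerP E T) := by
    intro T
    rw [hU T, realize_TowerFml]
    simp
  obtain ⟨W, hW⟩ := unionA U
  obtain ⟨C, hC⟩ := unionA W
  obtain ⟨cP, hcP⟩ := powA C
  obtain ⟨s, hs⟩ := pairA C cP
  obtain ⟨Tstar, hTstar0⟩ := bin_union E pairA unionA W s
  have hTstar : ∀ z, E z Tstar ↔ (E z W ∨ (z = C ∨ z = cP)) := by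
    intro z
    rw [hTstar0 z, hs z]
  -- basic facts
  have fw_tower : ∀ {c : M}, E c W → ∃ T, TowerP E T ∧ E c T ∧ E T U := by
    intro c hcW
    obtain ⟨T, hTU, hcT⟩ := (hW c).1 hcW
    exact ⟨T, ((hU' T).1 hTU).2, hcT, hTU⟩
  have f1 : ∀ c, E c W → TSet E c := by
    intro c hcW
    obtain ⟨T, hT, hcT, -⟩ := fw_tower hcW
    exact hT.1 c hcT
  have f2 : ∀ c, E c W → ∀ z, E z c → E z C := by
    intro c hcW z hz
    exact (hC z).2 ⟨c, hcW, hz⟩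
  have f3 : ∀ c, E c W → ∀ c', E c' W → (E c c' ∨ (c = c' ∨ E c' c)) := by
    intro c hcW c' hc'W
    obtain ⟨T, hT, hcT, -⟩ := fw_tower hcW
    obtain ⟨T', hT', hc'T', -⟩ := fw_tower hc'W
    exact tower_comp E ext sepA fndA hT hT' hcT hc'T'
  have f4 : ∀ c, E c W → (E c C ∨ c = C) := by
    intro c hcW
    by_cases hex : ∃ c', E c' W ∧ E c c'
    · obtain ⟨c', h1, h2⟩ := hex
      exact Or.inl ((hC c).2 ⟨c', h1, h2⟩)
    · push_neg at hex
      refine Or.inr (ext c C fun z => ⟨f2 c hcW z, ?_⟩)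
      intro hz
      obtain ⟨c', hc'W, hzc'⟩ := (hC z).1 hz
      rcases f3 c hcW c' hc'W with h | h | h
      · exact absurd h (hex c' hc'W)
      · exact h ▸ hzc'
      · exact (f1 c hcW).1 c' h z hzc'
  have f5 : TSet E C := by
    constructor
    · intro y hy z hz
      obtain ⟨c, hcW, hyc⟩ := (hC y).1 hy
      exact f2 c hcW z ((f1 c hcW).1 y hyc z hz)
    · intro y hy x hx
      obtain ⟨c, hcW, hyc⟩ := (hC y).1 hy
      exact f2 c hcW x ((f1 c hcW).2 y hyc x hx)
  have f6 : TSet E cP := by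
    constructor
    · intro y hy z hz
      have hyC : ∀ r, E r y → E r C := (hcP y).1 hy
      have hzC : E z C := hyC z hz
      obtain ⟨c, hcW, hzc⟩ := (hC z).1 hzC
      refine (hcP z).2 fun r hr => f2 c hcW r ((f1 c hcW).1 z hzc r hr)
    · intro y hy x hx
      have hyC : ∀ r, E r y → E r C := (hcP y).1 hy
      exact (hcP x).2 fun r hr => hyC r (hx r hr)
  -- Tstar is a tower
  have hTower : TowerP E Tstar := by
    refine ⟨?_, ?_, ?_, ?_⟩
    · intro c hcT
      rcases (hTstar c).1 hcT with h | h | h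
      · exact f1 c h
      · exact h ▸ f5
      · exact h ▸ f6
    · intro c hcT c' hc'T
      rcases (hTstar c).1 hcT with h | rfl | rfl <;>
        rcases (hTstar c').1 hc'T with h' | rfl | rfl
      · exact f3 c h c' h'
      · rcases f4 c h with h2 | h2
        · exact Or.inl h2
        · exact Or.inr (Or.inl h2)
      · exact Or.inl ((hcP c).2 (f2 c h))
      · rcases f4 c' h' with h2 | h2
        · exact Or.inr (Or.inr h2)
        · exact Or.inr (Or.inl h2.symm)
      · exact Or.inr (Or.inl rfl)
      · exact Or.inl ((hcP c).2 fun r hr => hr)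
      · exact Or.inr (Or.inr ((hcP c').2 (f2 c' h')))
      · exact Or.inr (Or.inr ((hcP c').2 fun r hr => hr))
      · exact Or.inr (Or.inl rfl)
    · intro c hcT x hx
      rcases (hTstar c).1 hcT with h | rfl | rfl
      · obtain ⟨T, hT, hcT', hTU⟩ := fw_tower h
        obtain ⟨d, hdT, hdc, hsub⟩ := hT.2.2.1 c hcT' x hx
        have hdW : E d W := (hW d).2 ⟨T, hTU, hdT⟩
        exact ⟨d, (hTstar d).2 (Or.inl hdW), hdc, hsub⟩
      · -- c = C
        obtain ⟨c', hc'W, hxc'⟩ := (hC x).1 hx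
        obtain ⟨T, hT, hc'T, hTU⟩ := fw_tower hc'W
        obtain ⟨d, hdT, hdc', hsub⟩ := hT.2.2.1 c' hc'T x hxc'
        have hdW : E d W := (hW d).2 ⟨T, hTU, hdT⟩
        exact ⟨d, (hTstar d).2 (Or.inl hdW), (hC d).2 ⟨c', hc'W, hdc'⟩, hsub⟩
      · -- c = cP
        exact ⟨C, (hTstar C).2 (Or.inr (Or.inl rfl)), (hcP C).2 fun r hr => hr,
          (hcP x).1 hx⟩
    · intro c hcT d hdc hTSd x hsub
      rcases (hTstar c).1 hcT with h | rfl | rfl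
      · obtain ⟨T, hT, hcT', -⟩ := fw_tower h
        exact hT.2.2.2 c hcT' d hdc hTSd x hsub
      · -- c = C
        obtain ⟨c', hc'W, hdc'⟩ := (hC d).1 hdc
        obtain ⟨T, hT, hc'T, -⟩ := fw_tower hc'W
        exact f2 c' hc'W x (hT.2.2.2 c' hc'T d hdc' hTSd x hsub)
      · -- c = cP
        have hdC : ∀ r, E r d → E r C := (hcP d).1 hdc
        exact (hcP x).2 fun r hr => hdC r (hsub r hr)
  -- now a ⊆ C, so a ∈ cP ∈ Tstar : contradiction with minimality of a
  have haC : ∀ u, E u a → E u C := by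
    intro u hu
    obtain ⟨T, hTY, hr⟩ := hY u hu
    rw [hrcoll] at hr
    obtain ⟨hTow, c, hcT, huc⟩ := hr
    have hTU : E T U := (hU' T).2 ⟨hTY, hTow⟩
    exact (hC u).2 ⟨c, (hW c).2 ⟨T, hTU, hcT⟩, huc⟩
  exact ha1' Tstar cP hTower ((hTstar cP).2 (Or.inr (Or.inr rfl))) ((hcP a).2 haC)

end TowerTotal
section Absoluteness

variable {M : Type*} (E : M → M → Prop) (i : M → M)

/-- Δ₀^P formulas are absolute for rank-initial self-embeddings. -/
lemma delta0P_abs (hinj : Function.Injective i) (hiff : ∀ a b : M, E a b ↔ E (i a) (i b))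
    (hmem : ∀ x m : M, E x (i m) → ∃ x', i x' = x)
    (hsub : ∀ x m : M, (∀ z, E z x → E z (i m)) → ∃ x', i x' = x) :
    ∀ {n : ℕ} {φ : Fml n}, IsDelta0P n φ →
      ∀ v : Fin n → M, (Realize E n φ v ↔ Realize E n φ (fun k => i (v k))) := by
  intro n φ h
  induction h with
  | mem i1 j1 => intro v; exact hiff _ _
  | eq i1 j1 =>
    intro v
    simp only [realize_eq]
    exact ⟨fun h => h ▸ rfl, fun h => hinj h⟩
  | not _ ih => intro v; simp only [realize_not, ih v]
  | and _ _ ih1 ih2 => intro v; simp only [realize_and, ih1 v, ih2 v]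
  | @allMem n' j φ' _ ih =>
    intro v
    simp only [realize_all, realize_imp, realize_mem, Fin.cons_succ, Fin.cons_zero]
    constructor
    · intro hall x hx
      obtain ⟨x', rfl⟩ := hmem x (v j) hx
      have hx' : E x' (v j) := (hiff _ _).2 hx
      have := (ih (Fin.cons x' v)).1 (hall x' hx')
      have hv : (fun k => i ((Fin.cons x' v : Fin (n' + 1) → M) k)) =
          (Fin.cons (i x') (fun k => i (v k)) : Fin (n' + 1) → M) := by
        funext k
        refine Fin.cases rfl (fun l => ?_) k
        simp
      rwa [hv] at this
    · intro hall x hx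
      have := hall (i x) ((hiff _ _).1 hx)
      have hv : (fun k => i ((Fin.cons x v : Fin (n' + 1) → M) k)) =
          (Fin.cons (i x) (fun k => i (v k)) : Fin (n' + 1) → M) := by
        funext k
        refine Fin.cases rfl (fun l => ?_) k
        simp
      rw [ih (Fin.cons x v), hv]
      exact this
  | @allSub n' j φ' _ ih =>
    intro v
    simp only [realize_all, realize_imp, realize_subeq, Fin.cons_succ, Fin.cons_zero]
    constructor
    · intro hall x hx
      obtain ⟨x', rfl⟩ := hsub x (v j) hx
      have hx' : ∀ z, E z x' → E z (v j) := by
        intro z hz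
        exact (hiff _ _).2 (hx (i z) ((hiff _ _).1 hz))
      have := (ih (Fin.cons x' v)).1 (hall x' hx')
      have hv : (fun k => i ((Fin.cons x' v : Fin (n' + 1) → M) k)) =
          (Fin.cons (i x') (fun k => i (v k)) : Fin (n' + 1) → M) := by
        funext k
        refine Fin.cases rfl (fun l => ?_) k
        simp
      rwa [hv] at this
    · intro hall x hx
      have hix : ∀ z, E z (i x) → E z (i (v j)) := by
        intro z hz
        obtain ⟨z', rfl⟩ := hmem z x hz
        exact (hiff _ _).1 (hx z' ((hiff _ _).2 hz))
      have := hall (i x) hix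
      have hv : (fun k => i ((Fin.cons x v : Fin (n' + 1) → M) k)) =
          (Fin.cons (i x) (fun k => i (v k)) : Fin (n' + 1) → M) := by
        funext k
        refine Fin.cases rfl (fun l => ?_) k
        simp
      rw [ih (Fin.cons x v), hv]
      exact this

end Absoluteness
section Chi

/-- Variable renaming used for the final separation instance. -/
def gmap (n : ℕ) : Fin (n + 2) → Fin (n + 3) :=
  fun k => Fin.cases (0 : Fin (n + 3))
    (fun j => Fin.cases ((0 : Fin (n + 2)).succ) (fun l => l.succ.succ.succ) j) k

/-- The formula `∃ x ∈ c, ψ(x, u, v)` (with `u` at 0, `c` at 1, parameters above). -/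
def chi (n : ℕ) (ψ : Fml (n + 2)) : Fml (n + 2) :=
  exIn ((0 : Fin (n + 1)).succ) (rename (n + 2) (n + 3) (gmap n) ψ)

lemma IsDelta0P_chi {n : ℕ} {ψ : Fml (n + 2)} (h : IsDelta0P (n + 2) ψ) :
    IsDelta0P (n + 2) (chi n ψ) :=
  .exIn' _ (h.rename_pres _)

lemma realize_chi {M : Type*} (E : M → M → Prop) {n : ℕ} (ψ : Fml (n + 2))
    (u c : M) (v : Fin n → M) :
    Realize E (n + 2) (chi n ψ) (Fin.cons u (Fin.cons c v)) ↔
      ∃ x, E x c ∧ Realize E (n + 2) ψ (Fin.cons x (Fin.cons u v)) := by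
  simp only [chi, realize_exIn, realize_rename, Fin.cons_succ, Fin.cons_zero]
  refine exists_congr fun x => and_congr_right fun _ => ?_
  have hv : (fun k => (Fin.cons x (Fin.cons u (Fin.cons c v)) : Fin (n + 3) → M)
        (gmap n k)) = (Fin.cons x (Fin.cons u v) : Fin (n + 2) → M) := by
    funext k
    refine Fin.cases ?_ (fun j => ?_) k
    · rfl
    · refine Fin.cases ?_ (fun l => ?_) j
      · rfl
      · rfl
  rw [hv]

end Chi
end SetTh

open SetTh in
/-- **Ressayre-style, easy direction.** Let `M` be a countable non-standard model of
KP^P. If for every `a ∈ M` there is a proper, bounded, rank-initial self-embedding of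
`M` fixing every `∈^M`-member of `a` pointwise, then `M ⊨ Σ₁^P-Separation`. -/
theorem stmt_18 {M : Type} (E : M → M → Prop) (hcount : Countable M)
    (hM : KPP E) (hns : ∃ x : M, ¬ Acc E x)
    (rk : M → M) (hrk : IsRankFn E rk)
    (hyp : ∀ a : M, ∃ i : M → M, IsEmbedding E E i ∧
      IsRankInitialEmb E rk i ∧
      Set.range i ≠ Set.univ ∧
      (∃ μ, IsOrd E μ ∧ ∀ x : M, E (rk (i x)) μ) ∧
      (∀ y : M, E y a → i y = y)) :
    SepScheme E (IsSigmaP 1) := by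
  classical
  obtain ⟨x00, -⟩ := hns
  haveI : Nonempty M := ⟨x00⟩
  obtain ⟨ext, pairA, unionA, powA, -, sepA, collA, fndA⟩ := hM
  intro n φ hφ v a
  obtain ⟨ψ, rfl, hψ0⟩ := hφ
  have hψ : IsDelta0P (n + 2) ψ := hψ0
  -- a set whose members are those of `a` together with the parameters
  obtain ⟨a₀, ha₀⟩ := params_set E pairA unionA n v a
  obtain ⟨i, hemb, hri, hprop, -, hfixa₀⟩ := hyp a₀
  obtain ⟨hinj, hiff⟩ := hemb
  -- range facts
  have hmemR : ∀ x m : M, E x (i m) → ∃ x', i x' = x := by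
    intro x m h
    exact hri m x (Or.inr (hrk.2.1 (i m) x h))
  have hsubR : ∀ x m : M, (∀ z, E z x → E z (i m)) → ∃ x', i x' = x := by
    intro x m h
    refine hri m x (hrk.2.2 x (rk (i m)) (hrk.1 (i m)) ?_)
    intro y hy
    exact hrk.2.1 (i m) y (h y hy)
  have habs : ∀ {n' : ℕ} {φ' : Fml n'}, IsDelta0P n' φ' →
      ∀ v' : Fin n' → M, (Realize E n' φ' v' ↔ Realize E n' φ' (fun k => i (v' k))) :=
    fun h v' => delta0P_abs E i hinj hiff hmemR hsubR h v'
  have htotal := tower_total E ext pairA unionA powA sepA collA fndA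
  -- a point outside the range, and a stage containing it
  obtain ⟨wstar, hwstar⟩ : ∃ w : M, w ∉ Set.range i := by
    by_contra h
    push_neg at h
    exact hprop (Set.eq_univ_of_forall h)
  obtain ⟨T₁, c₁, hT₁, hc₁T, hw₁⟩ := htotal wstar
  -- the stage c₁ absorbs the whole range of i
  have hic : ∀ m : M, E (i m) c₁ := by
    intro m
    obtain ⟨T₀, c₀, hT₀, hc₀T, hmc₀⟩ := htotal m
    have hT₀' : TowerP E (i T₀) := by
      have h1 := habs IsDelta0P_TowerFml (fun _ : Fin 1 => T₀)
      rw [realize_TowerFml, realize_TowerFml] at h1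
      exact h1.1 hT₀
    have h2 : E (i c₀) (i T₀) := (hiff _ _).1 hc₀T
    have h3 : E (i m) (i c₀) := (hiff _ _).1 hmc₀
    rcases tower_comp E ext sepA fndA hT₀' hT₁ h2 hc₁T with h | h | h
    · exact (hT₁.1 c₁ hc₁T).1 (i c₀) h (i m) h3
    · exfalso
      obtain ⟨w', hw'⟩ := hmemR wstar c₀ (h ▸ hw₁)
      exact hwstar ⟨w', hw'⟩
    · exfalso
      obtain ⟨c₁', hc₁'⟩ := hmemR c₁ c₀ h
      obtain ⟨w', hw'⟩ := hmemR wstar c₁' (hc₁' ▸ hw₁)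
      exact hwstar ⟨w', hw'⟩
  -- the embedding fixes a's members and the parameters
  have hfixu : ∀ u, E u a → i u = u := fun u hu => hfixa₀ u ((ha₀ u).2 (Or.inl hu))
  have hfixv : ∀ k, i (v k) = v k := fun k => hfixa₀ (v k) ((ha₀ (v k)).2 (Or.inr ⟨k, rfl⟩))
  -- key equivalence
  have key : ∀ u, E u a →
      ((∃ x, Realize E (n + 2) ψ (Fin.cons x (Fin.cons u v))) ↔
        (∃ x, E x c₁ ∧ Realize E (n + 2) ψ (Fin.cons x (Fin.cons u v)))) := by
    intro u hu
    constructor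
    · rintro ⟨x₀, hx₀⟩
      refine ⟨i x₀, hic x₀, ?_⟩
      have h1 := (habs hψ (Fin.cons x₀ (Fin.cons u v))).1 hx₀
      have hv : (fun k => i ((Fin.cons x₀ (Fin.cons u v) : Fin (n + 2) → M) k)) =
          (Fin.cons (i x₀) (Fin.cons u v) : Fin (n + 2) → M) := by
        funext k
        refine Fin.cases rfl (fun j => ?_) k
        refine Fin.cases ?_ (fun l => ?_) j
        · simpa using hfixu u hu
        · simpa using hfixv l
      rwa [hv] at h1
    · rintro ⟨x₀, -, hx₀⟩
      exact ⟨x₀, hx₀⟩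
  -- apply Δ₀^P-Separation with the bounded formula
  obtain ⟨b, hb⟩ := sepA (n + 1) (chi n ψ) (IsDelta0P_chi hψ) (Fin.cons c₁ v) a
  refine ⟨b, fun u => ?_⟩
  rw [hb u, realize_chi]
  constructor
  · rintro ⟨hua, hx⟩
    refine ⟨hua, ?_⟩
    rw [realize_ex]
    exact (key u hua).2 hx
  · rintro ⟨hua, hx⟩
    rw [realize_ex] at hx
    exact ⟨hua, (key u hua).1 hx⟩
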